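/- arXiv:2104.13510 — 2 statements merged into one kernel-verified Lean document; each statement's English description precedes it below -/
import Mathlib

section
/- Let Ω be a nonempty convex subset of a locally convex topological vector space X, and let x̄ ∈ Ω. Then x̄ ∈ qri(Ω) if and only if x̄ is a nonsupport point of Ω, i.e., for every x* ∈ X*, if ⟨x*, x − x̄⟩ ≥ 0 for all x ∈ Ω then ⟨x*, x − x̄⟩ = 0 for all x ∈ Ω. -/
open Set Pointwise Filter Topology

/-- The cone generated by a set `A`: `{t • a | t ≥ 0, a ∈ A}`. -/
def coneGen {X : Type*} [AddCommGroup X] [Module ℝ X] (A : Set X) : Set X :=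
  {y | ∃ t : ℝ, 0 ≤ t ∧ ∃ a ∈ A, y = t • a}

/-- A set is a linear subspace if it is the carrier of a submodule. -/
def IsLinSubspace {X : Type*} [AddCommGroup X] [Module ℝ X] (s : Set X) : Prop :=
  ∃ L : Submodule ℝ X, (L : Set X) = s

/-- Intrinsic relative interior. -/
def iri {X : Type*} [AddCommGroup X] [Module ℝ X] (Ω : Set X) : Set X :=
  {x ∈ Ω | IsLinSubspace (coneGen ((fun y => y - x) '' Ω))}

/-- Quasi-relative interior. -/
def qri {X : Type*} [AddCommGroup X] [Module ℝ X] [TopologicalSpace X] (Ω : Set X) : Set X :=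
  {x ∈ Ω | IsLinSubspace (closure (coneGen ((fun y => y - x) '' Ω)))}

/-- Relative interior in a topological vector space. -/
def ri {X : Type*} [AddCommGroup X] [Module ℝ X] [TopologicalSpace X] (Ω : Set X) : Set X :=
  {x ∈ Ω | ∃ V ∈ nhds x, V ∩ closure ((affineSpan ℝ Ω : Set X)) ⊆ Ω}

/-- Normal cone (functional-analytic version), a subset of the topological dual. -/
def normalCone {X : Type*} [AddCommGroup X] [Module ℝ X] [TopologicalSpace X]
    (Ω : Set X) (xb : X) : Set (X →L[ℝ] ℝ) :=
  {f | ∀ x ∈ Ω, f (x - xb) ≤ 0}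

/-! Put `A = Ω - x̄` and `K = closure (coneGen A)`. Since `Ω` is convex, `K` is a closed convex
cone, and a continuous functional is nonnegative (or zero) on `K` exactly when it is on `A`.
So the claim is that a closed convex cone `K` in a locally convex space is a subspace iff every
continuous functional nonnegative on `K` vanishes on `K`. If `v ∈ K` but `-v ∉ K`, separating
`-v` from `K` gives `f ≥ 0` on `K` with `f (-v) < 0`, a functional that does not vanish at `v`. -/

section ConeGen

variable {X : Type*} [AddCommGroup X] [Module ℝ X] {A : Set X}

lemma subset_coneGen : A ⊆ coneGen A :=
  fun a ha => ⟨1, zero_le_one, a, ha, (one_smul ℝ a).symm⟩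

lemma Convex.smul_add_smul_mem_coneGen (hA : Convex ℝ A) {x y : X} (hx : x ∈ coneGen A)
    (hy : y ∈ coneGen A) {p q : ℝ} (hp : 0 ≤ p) (hq : 0 ≤ q) : p • x + q • y ∈ coneGen A := by
  obtain ⟨s, hs, a, ha, rfl⟩ := hx
  obtain ⟨t, ht, b, hb, rfl⟩ := hy
  have hps := mul_nonneg hp hs
  have hqt := mul_nonneg hq ht
  rcases (add_nonneg hps hqt).eq_or_lt with hzero | hpos
  · obtain ⟨hps0, hqt0⟩ := (add_eq_zero_iff_of_nonneg hps hqt).1 hzero.symm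
    exact ⟨0, le_rfl, a, ha, by simp [smul_smul, hps0, hqt0]⟩
  · -- rescale the conic combination to a convex combination of `a` and `b`
    refine ⟨p * s + q * t, hpos.le,
      (p * s / (p * s + q * t)) • a + (q * t / (p * s + q * t)) • b,
      hA ha hb (by positivity) (by positivity) (by field_simp), ?_⟩
    simp only [smul_add, smul_smul]
    field_simp

def Convex.pointedCone (hA : Convex ℝ A) (hne : A.Nonempty) : PointedCone ℝ X :=
  PointedCone.ofConeComb (coneGen A) (hne.mono subset_coneGen)
    fun _ hx _ hy _ hp _ hq => hA.smul_add_smul_mem_coneGen hx hy hp hq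

lemma forall_mem_closure_coneGen_nonneg_iff [TopologicalSpace X] (f : X →L[ℝ] ℝ) :
    (∀ y ∈ closure (coneGen A), 0 ≤ f y) ↔ ∀ a ∈ A, 0 ≤ f a := by
  refine ⟨fun h a ha => h a (subset_closure (subset_coneGen ha)), fun h y hy => ?_⟩
  have hcone : coneGen A ⊆ {y | 0 ≤ f y} := by
    rintro _ ⟨t, ht, a, ha, rfl⟩
    simpa only [mem_ofPred_eq, map_smul, smul_eq_mul] using mul_nonneg ht (h a ha)
  exact closure_minimal hcone (isClosed_le continuous_const f.continuous) hy

lemma forall_mem_closure_coneGen_eq_zero_iff [TopologicalSpace X] (f : X →L[ℝ] ℝ) :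
    (∀ y ∈ closure (coneGen A), f y = 0) ↔ ∀ a ∈ A, f a = 0 := by
  have forall_eq_zero_iff (g : X →L[ℝ] ℝ) (S : Set X) :
      (∀ y ∈ S, g y = 0) ↔ (∀ y ∈ S, 0 ≤ g y) ∧ ∀ y ∈ S, 0 ≤ (-g) y := by
    simp only [neg_apply, neg_nonneg, ← forall₂_and, le_antisymm_iff, and_comm]
  rw [forall_eq_zero_iff, forall_eq_zero_iff, forall_mem_closure_coneGen_nonneg_iff,
    forall_mem_closure_coneGen_nonneg_iff]

end ConeGen

lemma IsLinSubspace.eq_zero_of_nonneg {X : Type*} [AddCommGroup X] [Module ℝ X] {s : Set X}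
    (hs : IsLinSubspace s) {f : X →ₗ[ℝ] ℝ} (hf : ∀ x ∈ s, 0 ≤ f x) : ∀ x ∈ s, f x = 0 := by
  obtain ⟨L, rfl⟩ := hs
  intro x hx
  have hneg := hf (-x) (L.neg_mem hx)
  rw [map_neg, neg_nonneg] at hneg
  exact le_antisymm hneg (hf x hx)

lemma PointedCone.isLinSubspace_of_neg_mem {X : Type*} [AddCommGroup X] [Module ℝ X]
    (C : PointedCone ℝ X) (hneg : ∀ x ∈ C, -x ∈ C) : IsLinSubspace (C : Set X) :=
  ⟨C.lineal, by ext x; simpa using hneg x⟩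

namespace ProperCone

variable {E : Type*} [AddCommGroup E] [Module ℝ E] [TopologicalSpace E]
  [IsTopologicalAddGroup E] [ContinuousSMul ℝ E] [LocallyConvexSpace ℝ E]

lemma neg_mem_of_forall_dual_eq_zero (C : ProperCone ℝ E)
    (hC : ∀ f : StrongDual ℝ E, (∀ x ∈ C, 0 ≤ f x) → ∀ x ∈ C, f x = 0) {x : E} (hx : x ∈ C) :
    -x ∈ C := by
  by_contra hnx
  obtain ⟨f, hfC, hfx⟩ := C.hyperplane_separation_point hnx
  rw [map_neg, neg_lt_zero, hC f hfC x hx] at hfx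
  exact hfx.false

lemma isLinSubspace_iff_forall_dual_eq_zero (C : ProperCone ℝ E) :
    IsLinSubspace (C : Set E) ↔
      ∀ f : StrongDual ℝ E, (∀ x ∈ C, 0 ≤ f x) → ∀ x ∈ C, f x = 0 :=
  ⟨fun hC f => hC.eq_zero_of_nonneg (f := f),
    fun hC => C.toPointedCone.isLinSubspace_of_neg_mem fun _ => C.neg_mem_of_forall_dual_eq_zero hC⟩

end ProperCone

theorem qri_iff_nonsupport_general {X : Type*} [AddCommGroup X] [Module ℝ X]
    [TopologicalSpace X] [IsTopologicalAddGroup X] [ContinuousSMul ℝ X]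
    [LocallyConvexSpace ℝ X]
    (Ω : Set X) (hconv : Convex ℝ Ω) (xb : X) (hxb : xb ∈ Ω) :
    xb ∈ qri Ω ↔
      ∀ f : X →L[ℝ] ℝ, (∀ x ∈ Ω, 0 ≤ f (x - xb)) → ∀ x ∈ Ω, f (x - xb) = 0 := by
  set A := (fun y => y - xb) '' Ω
  have hA : Convex ℝ A := by simpa [A, sub_eq_neg_add] using hconv.translate (-xb)
  have hAne : A.Nonempty := ⟨_, mem_image_of_mem _ hxb⟩
  let C : ProperCone ℝ X := Submodule.closure (hA.pointedCone hAne)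
  have hC : (C : Set X) = closure (coneGen A) := rfl
  rw [qri, mem_ofPred_eq, and_iff_right hxb, ← hC, C.isLinSubspace_iff_forall_dual_eq_zero]
  simp only [SetLike.mem_coe.symm, hC, forall_mem_closure_coneGen_nonneg_iff,
    forall_mem_closure_coneGen_eq_zero_iff, A, forall_mem_image]

/-- `xb ∈ qri Ω` iff `xb` is a nonsupport point of `Ω`. -/
theorem qri_iff_nonsupport {X : Type*} [AddCommGroup X] [Module ℝ X]
    [TopologicalSpace X] [IsTopologicalAddGroup X] [ContinuousSMul ℝ X]
    [LocallyConvexSpace ℝ X]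
    (Ω : Set X) (hne : Ω.Nonempty) (hconv : Convex ℝ Ω) (xb : X) (hxb : xb ∈ Ω) :
    xb ∈ qri Ω ↔
      ∀ f : X →L[ℝ] ℝ, (∀ x ∈ Ω, 0 ≤ f (x - xb)) → ∀ x ∈ Ω, f (x - xb) = 0 :=
  qri_iff_nonsupport_general Ω hconv xb hxb
end

section
/- Let F: X ⇉ Y be a set-valued mapping between locally convex topological vector spaces whose graph is convex. Suppose that gph(F) is quasi-regular and that int(F(x)) ≠ ∅ for every x ∈ dom(F). Then qri(gph F) = {(x, y) ∈ X × Y | x ∈ qri(dom F) and y ∈ int(F(x))}, and moreover dom(F) is quasi-regular. -/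
open Set Pointwise Filter Topology

/-- The graph of a set-valued mapping. -/
def gph {X Y : Type*} (F : X → Set Y) : Set (X × Y) := {p | p.2 ∈ F p.1}

/-- The domain of a set-valued mapping. -/
def domF {X Y : Type*} (F : X → Set Y) : Set X := {x | (F x).Nonempty}

/-- A convex set is quasi-regular if its quasi-relative interior coincides with
its intrinsic relative interior. -/
def QuasiRegular {X : Type*} [AddCommGroup X] [Module ℝ X] [TopologicalSpace X]
    (Ω : Set X) : Prop :=
  qri Ω = iri Ω

/-!
If `y ∈ int F(x)`, then `F(x) - y` is a neighbourhood of zero, so the cone generated by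
`gph F - (x, y)` contains `{0} × Y`; being a convex cone it is closed under addition, hence it
equals `cone(dom F - x) × Y`. Thus `(x, y) ∈ qri (gph F)` as soon as `x ∈ qri (dom F)`.
Conversely, if `(x, y) ∈ iri (gph F)`, projecting the cone shows `x ∈ iri (dom F)`, and
`y - y₀` lies in the cone of `F(x) - y` for an interior point `y₀` of `F(x)`, which places `y` on
a segment starting at `y₀`, so `y ∈ int F(x)`. Quasi-regularity of the graph closes both loops.
-/

section Cone

variable {X Y : Type*} [AddCommGroup X] [Module ℝ X] [AddCommGroup Y] [Module ℝ Y]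

theorem LinearMap.image_coneGen (f : X →ₗ[ℝ] Y) (A : Set X) :
    f '' coneGen A = coneGen (f '' A) := by
  ext y
  constructor
  · rintro ⟨_, ⟨t, ht, a, ha, rfl⟩, rfl⟩
    exact ⟨t, ht, f a, mem_image_of_mem f ha, f.map_smul t a⟩
  · rintro ⟨t, ht, _, ⟨a, ha, rfl⟩, rfl⟩
    exact ⟨t • a, ⟨t, ht, a, ha, rfl⟩, f.map_smul t a⟩

theorem IsLinSubspace.image (f : X →ₗ[ℝ] Y) {s : Set X} (h : IsLinSubspace s) :
    IsLinSubspace (f '' s) := by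
  obtain ⟨L, rfl⟩ := h
  exact ⟨L.map f, Submodule.map_coe f L⟩

theorem Convex.add_mem_coneGen {A : Set X} (hA : Convex ℝ A) {p q : X}
    (hp : p ∈ coneGen A) (hq : q ∈ coneGen A) : p + q ∈ coneGen A := by
  obtain ⟨s, hs, a, ha, rfl⟩ := hp
  obtain ⟨t, ht, b, hb, rfl⟩ := hq
  rcases (add_nonneg hs ht).eq_or_lt with hst | hst
  · obtain ⟨rfl, rfl⟩ : s = 0 ∧ t = 0 := ⟨by linarith, by linarith⟩
    exact ⟨0, le_rfl, a, ha, by simp⟩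
  · refine ⟨s + t, hst.le, _, hA ha hb (div_nonneg hs hst.le) (div_nonneg ht hst.le)
      (by field_simp), ?_⟩
    rw [smul_add, smul_smul, smul_smul, mul_div_cancel₀ _ hst.ne', mul_div_cancel₀ _ hst.ne']

theorem Convex.image_sub_right {A : Set X} (hA : Convex ℝ A) (z : X) :
    Convex ℝ ((fun x => x - z) '' A) := by
  simpa only [sub_eq_neg_add] using hA.translate (-z)

variable [TopologicalSpace Y]

theorem Convex.mem_interior_of_sub_mem_coneGen [IsTopologicalAddGroup Y]
    [ContinuousConstSMul ℝ Y] {C : Set Y} (hC : Convex ℝ C) {y₀ y : Y}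
    (hy₀ : y₀ ∈ interior C) (h : y - y₀ ∈ coneGen ((fun y' => y' - y) '' C)) :
    y ∈ interior C := by
  obtain ⟨t, ht, _, ⟨y', hy', rfl⟩, hsub⟩ := h
  have ht₁ : 0 < 1 + t := by linarith
  have hcomb : (1 + t) • y = y₀ + t • y' := by linear_combination (norm := module) hsub
  have hy : y = (1 + t)⁻¹ • y₀ + (t / (1 + t)) • y' := by
    rw [← inv_smul_smul₀ ht₁.ne' y, hcomb, smul_add, smul_smul, div_eq_inv_mul]
  rw [hy]
  exact hC.combo_interior_self_mem_interior hy₀ hy' (inv_pos.2 ht₁) (div_nonneg ht ht₁.le)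
    (by field_simp)

theorem coneGen_eq_univ_of_mem_nhds_zero [ContinuousSMul ℝ Y] {A : Set Y} (hA : A ∈ 𝓝 0) :
    coneGen A = univ := by
  refine eq_univ_of_forall fun v => ?_
  have hsmul : Tendsto (fun t : ℝ => t • v) (𝓝[>] 0) (𝓝 0) :=
    ((continuous_id.smul continuous_const).tendsto' 0 0 (zero_smul ℝ v)).mono_left
      nhdsWithin_le_nhds
  obtain ⟨t, htA, ht⟩ := ((hsmul.eventually_mem hA).and self_mem_nhdsWithin).exists
  exact ⟨t⁻¹, inv_nonneg.2 (le_of_lt ht), t • v, htA, (inv_smul_smul₀ (ne_of_gt ht) v).symm⟩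

theorem iri_subset_qri [ContinuousAdd Y] [ContinuousConstSMul ℝ Y] (Ω : Set Y) :
    iri Ω ⊆ qri Ω := by
  rintro x ⟨hx, L, hL⟩
  exact ⟨hx, L.topologicalClosure, by rw [Submodule.topologicalClosure_coe, hL]⟩

end Cone

theorem fst_image_sub_gph {X Y : Type*} [Sub X] [Sub Y] (F : X → Set Y) (x : X) (y : Y) :
    Prod.fst '' ((fun q => q - (x, y)) '' gph F) = (fun x' => x' - x) '' domF F := by
  ext u
  constructor
  · rintro ⟨_, ⟨⟨x', y'⟩, hq, rfl⟩, rfl⟩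
    exact ⟨x', ⟨y', hq⟩, rfl⟩
  · rintro ⟨x', ⟨y', hy'⟩, rfl⟩
    exact ⟨(x', y') - (x, y), ⟨(x', y'), hy', rfl⟩, rfl⟩

section Graph

variable {X Y : Type*} [AddCommGroup X] [Module ℝ X] [AddCommGroup Y] [Module ℝ Y]
  {F : X → Set Y} {x : X} {y : Y}

theorem Convex.apply_of_gph (hconv : Convex ℝ (gph F)) (x : X) : Convex ℝ (F x) := by
  intro y₁ h₁ y₂ h₂ a b ha hb hab
  have hx : a • x + b • x = x := by rw [← add_smul, hab, one_smul]
  simpa [gph, hx] using hconv (x := (x, y₁)) (y := (x, y₂)) h₁ h₂ ha hb hab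

theorem fst_image_coneGen_sub_gph (x : X) (y : Y) :
    LinearMap.fst ℝ X Y '' coneGen ((fun q => q - (x, y)) '' gph F)
      = coneGen ((fun x' => x' - x) '' domF F) := by
  rw [LinearMap.image_coneGen, ← fst_image_sub_gph F x y]
  rfl

theorem mk_zero_mem_coneGen_sub_gph_iff (hy : y ∈ F x) {v : Y} :
    ((0 : X), v) ∈ coneGen ((fun q => q - (x, y)) '' gph F)
      ↔ v ∈ coneGen ((fun y' => y' - y) '' F x) := by
  constructor
  · rintro ⟨t, ht, _, ⟨⟨x', y'⟩, hq, rfl⟩, hv⟩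
    simp only [Prod.ext_iff, Prod.fst_sub, Prod.snd_sub, Prod.smul_fst, Prod.smul_snd] at hv
    obtain ⟨hx', rfl⟩ := hv
    rcases smul_eq_zero.1 hx'.symm with rfl | hx'
    · exact ⟨0, le_rfl, 0, ⟨y, hy, sub_self y⟩, by simp⟩
    · rw [sub_eq_zero.1 hx'] at hq
      exact ⟨t, ht, y' - y, ⟨y', hq, rfl⟩, rfl⟩
  · rintro ⟨t, ht, _, ⟨y', hy', rfl⟩, rfl⟩
    exact ⟨t, ht, (x, y') - (x, y), ⟨(x, y'), hy', rfl⟩, by simp⟩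

theorem mem_iri_domF_of_mk_mem_iri_gph (h : (x, y) ∈ iri (gph F)) : x ∈ iri (domF F) :=
  ⟨⟨y, h.1⟩, fst_image_coneGen_sub_gph (F := F) x y ▸ h.2.image (LinearMap.fst ℝ X Y)⟩

variable [TopologicalSpace Y] [IsTopologicalAddGroup Y]

theorem mem_interior_of_mk_mem_iri_gph [ContinuousConstSMul ℝ Y] (hconv : Convex ℝ (gph F))
    (hne : (interior (F x)).Nonempty) (h : (x, y) ∈ iri (gph F)) : y ∈ interior (F x) := by
  obtain ⟨hxy, L, hL⟩ := h
  change y ∈ F x at hxy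
  obtain ⟨y₀, hy₀⟩ := hne
  refine (hconv.apply_of_gph x).mem_interior_of_sub_mem_coneGen hy₀ ?_
  have hL₀ : ((0 : X), y₀ - y) ∈ L := by
    rw [← SetLike.mem_coe, hL, mk_zero_mem_coneGen_sub_gph_iff hxy]
    exact ⟨1, zero_le_one, y₀ - y, ⟨y₀, interior_subset hy₀, rfl⟩, (one_smul ℝ _).symm⟩
  rw [← mk_zero_mem_coneGen_sub_gph_iff hxy, ← hL]
  simpa using L.neg_mem hL₀

theorem coneGen_sub_gph_eq_prod [ContinuousSMul ℝ Y] (hconv : Convex ℝ (gph F))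
    (hy : y ∈ interior (F x)) :
    coneGen ((fun q => q - (x, y)) '' gph F)
      = coneGen ((fun x' => x' - x) '' domF F) ×ˢ (univ : Set Y) := by
  rw [← fst_image_coneGen_sub_gph x y]
  refine Subset.antisymm (fun p hp => ⟨mem_image_of_mem _ hp, trivial⟩) ?_
  rintro ⟨u, v⟩ ⟨⟨k, hk, rfl⟩, -⟩
  have hnhds : (fun y' => y' - y) '' F x ∈ 𝓝 0 := by
    simpa using (isOpenMap_sub_right y).image_mem_nhds (mem_interior_iff_mem_nhds.1 hy)
  have hvert : ((0 : X), v - k.2) ∈ coneGen ((fun q => q - (x, y)) '' gph F) := by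
    rw [mk_zero_mem_coneGen_sub_gph_iff (interior_subset hy),
      coneGen_eq_univ_of_mem_nhds_zero hnhds]
    trivial
  have hsplit : (LinearMap.fst ℝ X Y k, v) = k + ((0 : X), v - k.2) := by ext <;> simp
  rw [hsplit]
  exact (hconv.image_sub_right (x, y)).add_mem_coneGen hk hvert

variable [TopologicalSpace X] [ContinuousSMul ℝ Y]

theorem mk_mem_qri_gph (hconv : Convex ℝ (gph F)) (hx : x ∈ qri (domF F))
    (hy : y ∈ interior (F x)) : (x, y) ∈ qri (gph F) := by
  obtain ⟨-, N, hN⟩ := hx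
  refine ⟨(interior_subset hy : y ∈ F x), N.prod ⊤, ?_⟩
  rw [coneGen_sub_gph_eq_prod hconv hy, closure_prod_eq, closure_univ, ← hN]
  rfl

end Graph

theorem qri_gph_eq_of_quasiRegular_general {X Y : Type*} [AddCommGroup X] [Module ℝ X]
    [TopologicalSpace X] [IsTopologicalAddGroup X] [ContinuousSMul ℝ X]
    [AddCommGroup Y] [Module ℝ Y]
    [TopologicalSpace Y] [IsTopologicalAddGroup Y] [ContinuousSMul ℝ Y]
    (F : X → Set Y) (hconv : Convex ℝ (gph F))
    (hreg : QuasiRegular (gph F))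
    (hint : ∀ x ∈ domF F, (interior (F x)).Nonempty) :
    qri (gph F) = {p : X × Y | p.1 ∈ qri (domF F) ∧ p.2 ∈ interior (F p.1)} ∧
      QuasiRegular (domF F) := by
  refine ⟨?_, Subset.antisymm (fun x hx => ?_) (iri_subset_qri _)⟩
  · ext ⟨x, y⟩
    refine ⟨fun h => ?_, fun ⟨hx, hy⟩ => mk_mem_qri_gph hconv hx hy⟩
    rw [hreg] at h
    exact ⟨iri_subset_qri _ (mem_iri_domF_of_mk_mem_iri_gph h),
      mem_interior_of_mk_mem_iri_gph hconv (hint x ⟨y, h.1⟩) h⟩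
  · obtain ⟨y, hy⟩ := hint x hx.1
    have hxy := mk_mem_qri_gph hconv hx hy
    rw [hreg] at hxy
    exact mem_iri_domF_of_mk_mem_iri_gph hxy

/-- if the graph of a convex set-valued mapping `F` between LCTV
spaces is quasi-regular and `int (F x) ≠ ∅` for every `x ∈ dom F`, then
`qri (gph F) = {(x, y) | x ∈ qri (dom F), y ∈ int (F x)}` and `dom F` is quasi-regular. -/
theorem qri_gph_eq_of_quasiRegular {X Y : Type*} [AddCommGroup X] [Module ℝ X]
    [TopologicalSpace X] [IsTopologicalAddGroup X] [ContinuousSMul ℝ X]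
    [LocallyConvexSpace ℝ X]
    [AddCommGroup Y] [Module ℝ Y]
    [TopologicalSpace Y] [IsTopologicalAddGroup Y] [ContinuousSMul ℝ Y]
    [LocallyConvexSpace ℝ Y]
    (F : X → Set Y) (hconv : Convex ℝ (gph F))
    (hreg : QuasiRegular (gph F))
    (hint : ∀ x ∈ domF F, (interior (F x)).Nonempty) :
    qri (gph F) = {p : X × Y | p.1 ∈ qri (domF F) ∧ p.2 ∈ interior (F p.1)} ∧
      QuasiRegular (domF F) :=
  qri_gph_eq_of_quasiRegular_general F hconv hreg hint
end
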